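/- Let (A,≻,≺) be a finite-dimensional dendriform algebra over a field F with associated associative product x*y = x≻y + x≺y, and let r ∈ A⊗A be symmetric. Then r satisfies the D-equation r₁₂*r₁₃ = r₁₃≺r₂₃ + r₂₃≻r₁₂ if and only if the induced linear map r : A* → A satisfies r(a*)*r(b*) = r(R≺*(r(a*))b* + L≻*(r(b*))a*) for all a*, b* ∈ A*, where ⟨R≺*(x)a*, y⟩ = ⟨a*, y≺x⟩ and ⟨L≻*(x)a*, y⟩ = ⟨a*, x≻y⟩. -/

import Mathlib

/-!
Pair both sides of the `D`-equation with `u ⊗ v ⊗ w ∈ A* ⊗ A* ⊗ A*`. The three terms become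
`u (r(v) * r(w))`, `u (r(R≺*(r(v)) w))` and `u (r(L≻*(r(w)) v))`; in the middle term `r(v)` first
appears contracted against the first leg of `r`, and symmetry of `r` turns it into `r(v)`.
Over a field such pairings separate the points of `A ⊗ A ⊗ A` and functionals separate the points
of `A`, so the tensor identity and the operator identity are equivalent.
-/

open TensorProduct LinearMap

section Prelude
variable {F : Type*} [Field F]

/-- Associativity of a (nonunital) bilinear product. -/
def IsAssocMul {A : Type*} [AddCommGroup A] [Module F A]
    (m : A →ₗ[F] A →ₗ[F] A) : Prop :=
  ∀ x y z, m (m x y) z = m x (m y z)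

/-- `(l, r, V)` is a bimodule of the associative algebra `(A, m)`. -/
def IsBimodule {A V : Type*} [AddCommGroup A] [Module F A]
    [AddCommGroup V] [Module F V]
    (m : A →ₗ[F] A →ₗ[F] A) (l r : A →ₗ[F] V →ₗ[F] V) : Prop :=
  (∀ x y v, l (m x y) v = l x (l y v)) ∧
  (∀ x y v, r (m x y) v = r y (r x v)) ∧
  (∀ x y v, l x (r y v) = r y (l x v))

/-- `(A, B, lA, rA, lB, rB)` is a matched pair of associative algebras. -/
def IsMatchedPair {A B : Type*} [AddCommGroup A] [Module F A]
    [AddCommGroup B] [Module F B]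
    (mA : A →ₗ[F] A →ₗ[F] A) (mB : B →ₗ[F] B →ₗ[F] B)
    (lA rA : A →ₗ[F] B →ₗ[F] B) (lB rB : B →ₗ[F] A →ₗ[F] A) : Prop :=
  IsAssocMul mA ∧ IsAssocMul mB ∧ IsBimodule mA lA rA ∧ IsBimodule mB lB rB ∧
  (∀ x a b, lA x (mB a b) = lA (rB a x) b + mB (lA x a) b) ∧
  (∀ x a b, rA x (mB a b) = rA (lB b x) a + mB a (rA x b)) ∧
  (∀ a x y, lB a (mA x y) = lB (rA x a) y + mA (lB a x) y) ∧
  (∀ a x y, rB a (mA x y) = rB (lA y a) x + mA x (rB a y)) ∧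
  (∀ x a b, lA (lB a x) b + mB (rA x a) b - rA (rB b x) a - mB a (lA x b) = 0) ∧
  (∀ a x y, lB (lA x a) y + mA (rB a x) y - rB (rA y a) x - mA x (lB a y) = 0)

/-- Dendriform algebra axioms for a pair of bilinear products `≻ = s`, `≺ = p`. -/
def IsDendriform {A : Type*} [AddCommGroup A] [Module F A]
    (s p : A →ₗ[F] A →ₗ[F] A) : Prop :=
  (∀ x y z, p (p x y) z = p x (s y z + p y z)) ∧
  (∀ x y z, p (s x y) z = s x (p y z)) ∧
  (∀ x y z, s x (s y z) = s (s x y + p x y) z)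

/-- The pairing of `f ⊗ g ∈ A* ⊗ A*` with elements of `A ⊗ A`. -/
noncomputable def pair2 {A : Type*} [AddCommGroup A] [Module F A]
    (f g : Module.Dual F A) : (A ⊗[F] A) →ₗ[F] F :=
  (TensorProduct.lid F F).toLinearMap ∘ₗ TensorProduct.map f g

/-- `t12 m (r ⊗ s)` is `r₁₂ ∙ s₁₃`: on `(x ⊗ y) ⊗ (x' ⊗ y')` it gives `m x x' ⊗ y ⊗ y'`. -/
noncomputable def t12 {A : Type*} [AddCommGroup A] [Module F A]
    (m : A →ₗ[F] A →ₗ[F] A) :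
    ((A ⊗[F] A) ⊗[F] (A ⊗[F] A)) →ₗ[F] A ⊗[F] (A ⊗[F] A) :=
  TensorProduct.map (TensorProduct.lift m) LinearMap.id ∘ₗ
    (TensorProduct.tensorTensorTensorComm F A A A A).toLinearMap

/-- `t13 m (r ⊗ s)` is `r₁₃ ∙ s₂₃`: on `(x ⊗ y) ⊗ (x' ⊗ y')` it gives `x ⊗ x' ⊗ m y y'`. -/
noncomputable def t13 {A : Type*} [AddCommGroup A] [Module F A]
    (m : A →ₗ[F] A →ₗ[F] A) :
    ((A ⊗[F] A) ⊗[F] (A ⊗[F] A)) →ₗ[F] A ⊗[F] (A ⊗[F] A) :=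
  (TensorProduct.assoc F A A A).toLinearMap ∘ₗ
    TensorProduct.map LinearMap.id (TensorProduct.lift m) ∘ₗ
    (TensorProduct.tensorTensorTensorComm F A A A A).toLinearMap

/-- `t23 m (r ⊗ s)` is `r₂₃ ∙ s₁₂`: on `(x ⊗ y) ⊗ (x' ⊗ y')` it gives `x' ⊗ m x y' ⊗ y`. -/
noncomputable def t23 {A : Type*} [AddCommGroup A] [Module F A]
    (m : A →ₗ[F] A →ₗ[F] A) :
    ((A ⊗[F] A) ⊗[F] (A ⊗[F] A)) →ₗ[F] A ⊗[F] (A ⊗[F] A) :=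
  (TensorProduct.leftComm F A A A).toLinearMap ∘ₗ
    TensorProduct.map LinearMap.id (TensorProduct.comm F A A).toLinearMap ∘ₗ
    TensorProduct.map (TensorProduct.lift m) LinearMap.id ∘ₗ
    (TensorProduct.tensorTensorTensorComm F A A A A).toLinearMap ∘ₗ
    TensorProduct.map LinearMap.id (TensorProduct.comm F A A).toLinearMap

/-- `aybE m r = r₁₂r₁₃ + r₁₃r₂₃ − r₂₃r₁₂`, the associative Yang–Baxter expression. -/
noncomputable def aybE {A : Type*} [AddCommGroup A] [Module F A]
    (m : A →ₗ[F] A →ₗ[F] A) (r : A ⊗[F] A) : A ⊗[F] (A ⊗[F] A) :=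
  t12 m (r ⊗ₜ r) + t13 m (r ⊗ₜ r) - t23 m (r ⊗ₜ r)

end Prelude

section DualPairing

variable {F A : Type*} [Field F] [AddCommGroup A] [Module F A]

noncomputable def pair3 (u v w : Module.Dual F A) : A ⊗[F] (A ⊗[F] A) →ₗ[F] F :=
  TensorProduct.lid F F ∘ₗ TensorProduct.map u (pair2 v w)

/-- A tensor `r` regarded as the map `A* → A` of the paper, `x ⊗ y ↦ (v ↦ v y • x)`. -/
noncomputable def tensorToMap : A ⊗[F] A →ₗ[F] Module.Dual F A →ₗ[F] A :=
  TensorProduct.lift (LinearMap.smulRightₗ.flip.compl₂ (Module.Dual.eval F A))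

@[simp] lemma pair2_tmul (u v : Module.Dual F A) (x y : A) :
    pair2 u v (x ⊗ₜ y) = u x * v y := by
  simp [pair2]

@[simp] lemma pair3_tmul (u v w : Module.Dual F A) (x y z : A) :
    pair3 u v w (x ⊗ₜ (y ⊗ₜ z)) = u x * (v y * w z) := by
  simp [pair3]

@[simp] lemma tensorToMap_tmul (x y : A) (v : Module.Dual F A) :
    tensorToMap (x ⊗ₜ y) v = v y • x := rfl

@[simp] lemma t12_tmul (m : A →ₗ[F] A →ₗ[F] A) (x y x' y' : A) :
    t12 m ((x ⊗ₜ y) ⊗ₜ (x' ⊗ₜ y')) = m x x' ⊗ₜ (y ⊗ₜ y') := by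
  simp [t12]

@[simp] lemma t13_tmul (m : A →ₗ[F] A →ₗ[F] A) (x y x' y' : A) :
    t13 m ((x ⊗ₜ y) ⊗ₜ (x' ⊗ₜ y')) = x ⊗ₜ (x' ⊗ₜ m y y') := by
  simp [t13]

@[simp] lemma t23_tmul (m : A →ₗ[F] A →ₗ[F] A) (x y x' y' : A) :
    t23 m ((x ⊗ₜ y) ⊗ₜ (x' ⊗ₜ y')) = x' ⊗ₜ (m x y' ⊗ₜ y) := by
  simp [t23]

lemma eq_of_forall_dual_apply_eq {x y : A} (h : ∀ u : Module.Dual F A, u x = u y) : x = y :=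
  Module.eval_apply_injective F (LinearMap.ext h)

lemma eq_zero_of_forall_pair3_eq_zero {t : A ⊗[F] (A ⊗[F] A)}
    (h : ∀ u v w : Module.Dual F A, pair3 u v w t = 0) : t = 0 := by
  let b := Module.Free.chooseBasis F A
  let b3 := b.tensorProduct (b.tensorProduct b)
  have hcoord : ∀ i j k, b3.coord (i, (j, k)) = pair3 (b.coord i) (b.coord j) (b.coord k) := by
    intro i j k
    ext x y z
    simp only [AlgebraTensorModule.curry_apply, restrictScalars_self, curry_apply, b3,
      Module.Basis.coord_apply, Module.Basis.tensorProduct_repr_tmul_apply, smul_eq_mul, pair3_tmul]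
    ring
  exact b3.forall_coord_eq_zero_iff.mp fun ⟨i, j, k⟩ => hcoord i j k ▸ h _ _ _

lemma eq_iff_forall_pair3_eq {t t' : A ⊗[F] (A ⊗[F] A)} :
    t = t' ↔ ∀ u v w : Module.Dual F A, pair3 u v w t = pair3 u v w t' := by
  refine ⟨fun h _ _ _ => h ▸ rfl, fun h => sub_eq_zero.mp ?_⟩
  exact eq_zero_of_forall_pair3_eq_zero fun u v w => by rw [map_sub, h, sub_self]

lemma apply_tensorToMap (u v : Module.Dual F A) (r : A ⊗[F] A) :
    u (tensorToMap r v) = pair2 u v r := by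
  induction r using TensorProduct.induction_on with
  | zero => simp
  | tmul x y => simp [mul_comm]
  | add r r' hr hr' => simp [hr, hr']

lemma eq_tensorToMap_of_apply_eq_pair2 {r : A ⊗[F] A} {ρ : Module.Dual F A →ₗ[F] A}
    (hρ : ∀ u v, u (ρ v) = pair2 u v r) : ρ = tensorToMap r :=
  LinearMap.ext fun v => eq_of_forall_dual_apply_eq fun u => by rw [hρ, apply_tensorToMap]

variable (m : A →ₗ[F] A →ₗ[F] A) (u v w : Module.Dual F A)

lemma pair3_t12 (r r' : A ⊗[F] A) :
    pair3 u v w (t12 m (r ⊗ₜ r')) = u (m (tensorToMap r v) (tensorToMap r' w)) := by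
  induction r using TensorProduct.induction_on with
  | zero => simp
  | add r₁ r₂ h₁ h₂ => simp [add_tmul, h₁, h₂]
  | tmul x y =>
    induction r' using TensorProduct.induction_on with
    | zero => simp
    | add r₁ r₂ h₁ h₂ => simp [tmul_add, h₁, h₂]
    | tmul x' y' =>
      simp only [t12_tmul, pair3_tmul, tensorToMap_tmul, map_smul, LinearMap.smul_apply,
        smul_eq_mul]
      ring

lemma pair3_t13 (r r' : A ⊗[F] A) :
    pair3 u v w (t13 m (r ⊗ₜ r')) =
      u (tensorToMap r (w ∘ₗ m.flip (tensorToMap (TensorProduct.comm F A A r') v))) := by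
  induction r using TensorProduct.induction_on with
  | zero => simp
  | add r₁ r₂ h₁ h₂ => simp [add_tmul, h₁, h₂]
  | tmul x y =>
    induction r' using TensorProduct.induction_on with
    | zero => simp
    | add r₁ r₂ h₁ h₂ => simp [tmul_add, add_mul, h₁, h₂]
    | tmul x' y' =>
      simp only [t13_tmul, pair3_tmul, comm_tmul, tensorToMap_tmul, map_smul, LinearMap.comp_apply,
        flip_apply, LinearMap.smul_apply, smul_eq_mul]
      ring

lemma pair3_t23 (r r' : A ⊗[F] A) :
    pair3 u v w (t23 m (r ⊗ₜ r')) = u (tensorToMap r' (v ∘ₗ m (tensorToMap r w))) := by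
  induction r using TensorProduct.induction_on with
  | zero => simp
  | add r₁ r₂ h₁ h₂ => simp [add_tmul, comp_add, h₁, h₂]
  | tmul x y =>
    induction r' using TensorProduct.induction_on with
    | zero => simp
    | add r₁ r₂ h₁ h₂ => simp [tmul_add, h₁, h₂]
    | tmul x' y' =>
      simp only [t23_tmul, pair3_tmul, tensorToMap_tmul, map_smul, LinearMap.comp_apply,
        LinearMap.smul_apply, smul_eq_mul]
      ring

end DualPairing

theorem D_equation_iff_operator_form_general
    {F A : Type*} [Field F] [AddCommGroup A] [Module F A]
    (s p : A →ₗ[F] A →ₗ[F] A)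
    (r : A ⊗[F] A)
    (hsymm : (TensorProduct.comm F A A) r = r)
    (rmap : Module.Dual F A →ₗ[F] A)
    (hrmap : ∀ u v : Module.Dual F A, u (rmap v) = pair2 u v r)
    -- the dual operators `R≺*` and `L≻*`
    (Rp Ls : A →ₗ[F] Module.Dual F A →ₗ[F] Module.Dual F A)
    (hRp : ∀ (x y : A) (a : Module.Dual F A), Rp x a y = a (p y x))
    (hLs : ∀ (x y : A) (a : Module.Dual F A), Ls x a y = a (s x y)) :
    (t12 (s + p) (r ⊗ₜ r) = t13 p (r ⊗ₜ r) + t23 s (r ⊗ₜ r)) ↔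
      (∀ a b : Module.Dual F A,
        (s + p) (rmap a) (rmap b) = rmap (Rp (rmap a) b + Ls (rmap b) a)) := by
  obtain rfl := eq_tensorToMap_of_apply_eq_pair2 hrmap
  have hRp_eq : ∀ x a, Rp x a = a ∘ₗ p.flip x := fun x a => LinearMap.ext fun y => hRp x y a
  have hLs_eq : ∀ x a, Ls x a = a ∘ₗ s x := fun x a => LinearMap.ext fun y => hLs x y a
  rw [eq_iff_forall_pair3_eq]
  simp only [map_add, pair3_t12, pair3_t13, pair3_t23, hsymm, hRp_eq, hLs_eq]
  exact ⟨fun h a b => eq_of_forall_dual_apply_eq fun u => by rw [h, map_add],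
    fun h u a b => by rw [h, map_add]⟩

/-- a symmetric `r` satisfies the `D`-equation iff
`r(a*)*r(b*) = r(R≺*(r(a*))b* + L≻*(r(b*))a*)` for all `a*, b*`. -/
theorem D_equation_iff_operator_form
    {F A : Type*} [Field F] [AddCommGroup A] [Module F A] [FiniteDimensional F A]
    (s p : A →ₗ[F] A →ₗ[F] A) (hd : IsDendriform s p)
    (r : A ⊗[F] A)
    (hsymm : (TensorProduct.comm F A A) r = r)
    (rmap : Module.Dual F A →ₗ[F] A)
    (hrmap : ∀ u v : Module.Dual F A, u (rmap v) = pair2 u v r)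
    -- the dual operators `R≺*` and `L≻*`
    (Rp Ls : A →ₗ[F] Module.Dual F A →ₗ[F] Module.Dual F A)
    (hRp : ∀ (x y : A) (a : Module.Dual F A), Rp x a y = a (p y x))
    (hLs : ∀ (x y : A) (a : Module.Dual F A), Ls x a y = a (s x y)) :
    (t12 (s + p) (r ⊗ₜ r) = t13 p (r ⊗ₜ r) + t23 s (r ⊗ₜ r)) ↔
      (∀ a b : Module.Dual F A,
        (s + p) (rmap a) (rmap b) = rmap (Rp (rmap a) b + Ls (rmap b) a)) :=
  D_equation_iff_operator_form_general s p r hsymm rmap hrmap Rp Ls hRp hLs
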